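/- For every m ≥ 1 and v ∈ (0,1], one has η_m(v) ≥ Σ_{k=0}^{m} C(m,k) ζ_k(v) (ln 2)^{m−k}, where C(m,k) is the binomial coefficient. -/

import Mathlib

open Real MeasureTheory

/-- The iterated kernel `ζ₀ ≡ 1`, `ζ_{k+1}(v) = ∫_v¹ ζ_k(s)/(v+s) ds`. -/
noncomputable def zetaFn : ℕ → ℝ → ℝ
  | 0 => fun _ => 1
  | k + 1 => fun v => ∫ s in v..(1 : ℝ), zetaFn k s / (v + s)

/-- The singular iterated kernel `η₀ ≡ 1`, `η_{m+1}(v) = ∫₀¹ η_m(s)/(v+s) ds`. -/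
noncomputable def etaFn : ℕ → ℝ → ℝ
  | 0 => fun _ => 1
  | m + 1 => fun v => ∫ s in (0 : ℝ)..1, etaFn m s / (v + s)

/-- pointwise facts on `Ioc a b` give a.e. facts on `Icc a b`. -/
lemma aeIcc {a b : ℝ} {p : ℝ → Prop} (h : ∀ x ∈ Set.Ioc a b, p x) :
    ∀ᵐ x ∂(volume.restrict (Set.Icc a b)), p x :=
  (ae_restrict_congr_set Ioc_ae_eq_Icc).mp (ae_restrict_of_forall_mem measurableSet_Ioc h)

lemma antitoneOn_div_kernel {f : ℝ → ℝ} {v : ℝ} (hv : 0 ≤ v)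
    (hnn : ∀ s ∈ Set.Ioc (0:ℝ) 1, 0 ≤ f s) (hfa : AntitoneOn f (Set.Ioc (0:ℝ) 1))
    {a b : ℝ} (h0 : 0 < a) (hb : b ≤ 1) :
    AntitoneOn (fun s => f s / (v + s)) (Set.Icc a b) := by
  intro s hs t ht hst
  have hsub : Set.Icc a b ⊆ Set.Ioc 0 1 := fun x hx => ⟨lt_of_lt_of_le h0 hx.1, hx.2.trans hb⟩
  have h1 : 0 < v + s := by have := (hsub hs).1; linarith
  have h2 : v + s ≤ v + t := by linarith
  exact div_le_div₀ (hnn s (hsub hs)) (hfa (hsub hs) (hsub ht) hst) h1 h2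

lemma zeta_facts (k : ℕ) :
    (∀ v ∈ Set.Ioc (0:ℝ) 1, 0 ≤ zetaFn k v) ∧ AntitoneOn (zetaFn k) (Set.Ioc (0:ℝ) 1) := by
  induction k with
  | zero =>
    refine ⟨fun v _ => by simp [zetaFn], fun s _ t _ _ => by simp [zetaFn]⟩
  | succ k ih =>
    obtain ⟨hnn, hanti⟩ := ih
    have hInt : ∀ w : ℝ, 0 ≤ w → ∀ a b : ℝ, 0 < a → a ≤ b → b ≤ 1 →
        IntervalIntegrable (fun s => zetaFn k s / (w + s)) volume a b := by
      intro w hw a b h0 hab hb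
      exact AntitoneOn.intervalIntegrable
        (by rw [Set.uIcc_of_le hab]; exact antitoneOn_div_kernel hw hnn hanti h0 hb)
    constructor
    · intro v hv
      show (0:ℝ) ≤ ∫ s in v..(1:ℝ), zetaFn k s / (v + s)
      apply intervalIntegral.integral_nonneg hv.2
      intro u hu
      have hu0 : 0 < u := lt_of_lt_of_le hv.1 hu.1
      exact div_nonneg (hnn u ⟨hu0, hu.2⟩) (by linarith [hv.1.le])
    · intro s hs t ht hst
      show (∫ u in t..(1:ℝ), zetaFn k u / (t + u)) ≤ ∫ u in s..(1:ℝ), zetaFn k u / (s + u)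
      have step1 : (∫ u in t..(1:ℝ), zetaFn k u / (t + u))
          ≤ ∫ u in t..(1:ℝ), zetaFn k u / (s + u) := by
        apply intervalIntegral.integral_mono_on ht.2
          (hInt t ht.1.le t 1 ht.1 ht.2 le_rfl) (hInt s hs.1.le t 1 ht.1 ht.2 le_rfl)
        intro u hu
        have hu0 : 0 < u := lt_of_lt_of_le ht.1 hu.1
        apply div_le_div_of_nonneg_left (hnn u ⟨hu0, hu.2⟩) (by linarith [hs.1]) (by linarith)
      have step2 : (∫ u in t..(1:ℝ), zetaFn k u / (s + u))
          ≤ ∫ u in s..(1:ℝ), zetaFn k u / (s + u) := by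
        apply intervalIntegral.integral_mono_interval hst ht.2 le_rfl ?_
          (hInt s hs.1.le s 1 hs.1 hs.2 le_rfl)
        filter_upwards [ae_restrict_of_forall_mem measurableSet_Ioc
          (fun u (hu : u ∈ Set.Ioc s 1) => hu)] with u hu
        have hu0 : 0 < u := lt_of_lt_of_le hs.1 hu.1.le
        exact div_nonneg (hnn u ⟨hu0, hu.2⟩) (by linarith [hs.1])
      exact step1.trans step2

lemma zeta_nonneg (k : ℕ) {v : ℝ} (hv : v ∈ Set.Ioc (0:ℝ) 1) : 0 ≤ zetaFn k v :=
  (zeta_facts k).1 v hv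

lemma zeta_intervalIntegrable (k : ℕ) {w a b : ℝ} (hw : 0 ≤ w) (h0 : 0 < a) (hab : a ≤ b)
    (hb : b ≤ 1) : IntervalIntegrable (fun s => zetaFn k s / (w + s)) volume a b := by
  exact AntitoneOn.intervalIntegrable
    (by rw [Set.uIcc_of_le hab]; exact antitoneOn_div_kernel hw (zeta_facts k).1 (zeta_facts k).2 h0 hb)

lemma eta_measurable (m : ℕ) : Measurable (etaFn m) := by
  induction m with
  | zero => show Measurable (fun _ : ℝ => (1:ℝ)); exact measurable_const
  | succ m ih =>
    have hfun : etaFn (m + 1) = fun v => ∫ s in Set.Ioc (0:ℝ) 1, etaFn m s / (v + s) := by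
      funext v
      show (∫ s in (0:ℝ)..1, etaFn m s / (v + s)) = _
      rw [intervalIntegral.integral_of_le (by norm_num : (0:ℝ) ≤ 1)]
    rw [hfun]
    have hjoint : StronglyMeasurable (fun p : ℝ × ℝ => etaFn m p.2 / (p.1 + p.2)) :=
      ((ih.comp measurable_snd).div (measurable_fst.add measurable_snd)).stronglyMeasurable
    exact hjoint.integral_prod_right'.measurable

lemma eta_nonneg (m : ℕ) : ∀ v ∈ Set.Ioc (0:ℝ) 1, 0 ≤ etaFn m v := by
  induction m with
  | zero => intro v _; show (0:ℝ) ≤ 1; norm_num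
  | succ m ih =>
    intro v hv
    show (0:ℝ) ≤ ∫ s in (0:ℝ)..1, etaFn m s / (v + s)
    apply intervalIntegral.integral_nonneg_of_ae_restrict (by norm_num : (0:ℝ) ≤ 1)
    apply aeIcc
    intro s hs
    exact div_nonneg (ih s hs) (by linarith [hv.1, hs.1])

lemma eta_bound (m : ℕ) : ∀ s ∈ Set.Ioc (0:ℝ) 1, etaFn m s ≤ 4 ^ m * s ^ (-(2⁻¹) : ℝ) := by
  induction m with
  | zero =>
    intro s hs
    have : (1:ℝ) ≤ s ^ (-(2⁻¹) : ℝ) :=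
      Real.one_le_rpow_of_pos_of_le_one_of_nonpos hs.1 hs.2 (by norm_num)
    simpa [etaFn] using this
  | succ m ih =>
    -- integrability of the integrand
    have hIntOn : ∀ v : ℝ, 0 < v →
        IntegrableOn (fun s => etaFn m s / (v + s)) (Set.Ioc (0:ℝ) 1) volume := by
      intro v hv
      have hmeas : AEStronglyMeasurable (fun s => etaFn m s / (v + s))
          (volume.restrict (Set.Ioc (0:ℝ) 1)) :=
        ((eta_measurable m).div (measurable_const.add measurable_id)).aestronglyMeasurable
      have hg : IntegrableOn (fun s : ℝ => (4 ^ m / v) * s ^ (-(2⁻¹) : ℝ))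
          (Set.Ioc (0:ℝ) 1) volume := by
        have : IntervalIntegrable (fun s : ℝ => s ^ (-(2⁻¹) : ℝ)) volume 0 1 :=
          intervalIntegral.intervalIntegrable_rpow' (by norm_num)
        exact (this.1.const_mul _)
      apply Integrable.mono' hg hmeas
      apply ae_restrict_of_forall_mem measurableSet_Ioc
      intro s hs
      have hs0 : 0 < s := hs.1
      have hb := ih s hs
      have hnn := eta_nonneg m s hs
      rw [Real.norm_eq_abs, abs_of_nonneg (div_nonneg hnn (by linarith))]
      rw [div_le_iff₀ (by linarith : (0:ℝ) < v + s)]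
      have hrp : (0:ℝ) ≤ s ^ (-(2⁻¹) : ℝ) := Real.rpow_nonneg hs0.le _
      calc etaFn m s ≤ 4 ^ m * s ^ (-(2⁻¹) : ℝ) := hb
        _ = (4 ^ m / v) * s ^ (-(2⁻¹) : ℝ) * v := by field_simp
        _ ≤ (4 ^ m / v) * s ^ (-(2⁻¹) : ℝ) * (v + s) := by
            have : (0:ℝ) ≤ (4 ^ m / v) * s ^ (-(2⁻¹) : ℝ) :=
              mul_nonneg (div_nonneg (by positivity) hv.le) hrp
            nlinarith
    intro s hs
    have hs0 : 0 < s := hs.1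
    have hs1 : s ≤ 1 := hs.2
    have hi01 : IntegrableOn (fun t => etaFn m t / (s + t)) (Set.Ioc (0:ℝ) 1) volume :=
      hIntOn s hs0
    have hi1 : IntervalIntegrable (fun t => etaFn m t / (s + t)) volume 0 s :=
      (intervalIntegrable_iff_integrableOn_Ioc_of_le hs0.le).mpr
        (hi01.mono_set (Set.Ioc_subset_Ioc le_rfl hs1))
    have hi2 : IntervalIntegrable (fun t => etaFn m t / (s + t)) volume s 1 :=
      (intervalIntegrable_iff_integrableOn_Ioc_of_le hs1).mpr
        (hi01.mono_set (Set.Ioc_subset_Ioc hs0.le le_rfl))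
    have hsplit : etaFn (m+1) s
        = (∫ t in (0:ℝ)..s, etaFn m t / (s + t)) + ∫ t in s..(1:ℝ), etaFn m t / (s + t) :=
      (intervalIntegral.integral_add_adjacent_intervals hi1 hi2).symm
    -- first piece
    have hg1 : IntervalIntegrable (fun t : ℝ => 4 ^ m * t ^ (-(2⁻¹) : ℝ) / s) volume 0 s := by
      exact ((intervalIntegral.intervalIntegrable_rpow' (by norm_num)).const_mul _).div_const _
    have hp1 : (∫ t in (0:ℝ)..s, etaFn m t / (s + t))
        ≤ ∫ t in (0:ℝ)..s, 4 ^ m * t ^ (-(2⁻¹) : ℝ) / s := by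
      apply intervalIntegral.integral_mono_ae_restrict hs0.le hi1 hg1
      apply aeIcc
      intro t ht
      have ht0 : 0 < t := ht.1
      apply div_le_div₀ (by positivity) (ih t ⟨ht0, ht.2.trans hs1⟩) hs0 (by linarith)
    have hv1 : (∫ t in (0:ℝ)..s, 4 ^ m * t ^ (-(2⁻¹) : ℝ) / s)
        = 2 * 4 ^ m * s ^ (-(2⁻¹) : ℝ) := by
      rw [intervalIntegral.integral_div, intervalIntegral.integral_const_mul,
        integral_rpow (Or.inl (by norm_num))]
      rw [Real.zero_rpow (by norm_num)]
      have key : s ^ ((-(2⁻¹):ℝ) + 1) = s ^ (-(2⁻¹):ℝ) * s := by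
        rw [Real.rpow_add hs0, Real.rpow_one]
      rw [key]
      field_simp
      ring
    -- second piece
    have hg2 : IntervalIntegrable (fun t : ℝ => 4 ^ m * t ^ (-(3/2) : ℝ)) volume s 1 := by
      apply IntervalIntegrable.const_mul
      apply intervalIntegral.intervalIntegrable_rpow
      right
      rw [Set.uIcc_of_le hs1]
      intro h
      exact absurd h.1 (by linarith)
    have hp2 : (∫ t in s..(1:ℝ), etaFn m t / (s + t))
        ≤ ∫ t in s..(1:ℝ), 4 ^ m * t ^ (-(3/2) : ℝ) := by
      apply intervalIntegral.integral_mono_on hs1 hi2 hg2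
      intro t ht
      have ht0 : 0 < t := lt_of_lt_of_le hs0 ht.1
      have hb := ih t ⟨ht0, ht.2⟩
      calc etaFn m t / (s + t) ≤ 4 ^ m * t ^ (-(2⁻¹) : ℝ) / t := by
            apply div_le_div₀ (by positivity) hb ht0 (by linarith)
        _ = 4 ^ m * t ^ (-(3/2) : ℝ) := by
            rw [mul_div_assoc]
            congr 1
            rw [div_eq_iff (ne_of_gt ht0)]
            rw [show (-(2⁻¹):ℝ) = -(3/2) + 1 by norm_num, Real.rpow_add ht0, Real.rpow_one]
    have hv2 : (∫ t in s..(1:ℝ), 4 ^ m * t ^ (-(3/2) : ℝ))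
        ≤ 2 * 4 ^ m * s ^ (-(2⁻¹) : ℝ) := by
      rw [intervalIntegral.integral_const_mul,
        integral_rpow (Or.inr ⟨by norm_num, by
          rw [Set.uIcc_of_le hs1]; intro h; exact absurd h.1 (by linarith)⟩)]
      rw [Real.one_rpow, show (-(3/2) : ℝ) + 1 = -(2⁻¹) by norm_num]
      have hrp : (0:ℝ) ≤ s ^ (-(2⁻¹) : ℝ) := Real.rpow_nonneg hs0.le _
      have h4 : (0:ℝ) < 4 ^ m := by positivity
      rw [div_neg, div_eq_mul_inv]
      nlinarith [Real.rpow_nonneg hs0.le (-(2⁻¹) : ℝ)]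
    calc etaFn (m+1) s
        ≤ 2 * 4 ^ m * s ^ (-(2⁻¹) : ℝ) + 2 * 4 ^ m * s ^ (-(2⁻¹) : ℝ) := by
          rw [hsplit]; exact add_le_add (hp1.trans_eq hv1) (hp2.trans hv2)
      _ = 4 ^ (m+1) * s ^ (-(2⁻¹) : ℝ) := by ring

lemma eta_integrableOn (m : ℕ) {v : ℝ} (hv : 0 < v) :
    IntegrableOn (fun s => etaFn m s / (v + s)) (Set.Ioc (0:ℝ) 1) volume := by
  have hmeas : AEStronglyMeasurable (fun s => etaFn m s / (v + s))
      (volume.restrict (Set.Ioc (0:ℝ) 1)) :=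
    ((eta_measurable m).div (measurable_const.add measurable_id)).aestronglyMeasurable
  have hg : IntegrableOn (fun s : ℝ => (4 ^ m / v) * s ^ (-(2⁻¹) : ℝ))
      (Set.Ioc (0:ℝ) 1) volume := by
    have : IntervalIntegrable (fun s : ℝ => s ^ (-(2⁻¹) : ℝ)) volume 0 1 :=
      intervalIntegral.intervalIntegrable_rpow' (by norm_num)
    exact this.1.const_mul _
  apply Integrable.mono' hg hmeas
  apply ae_restrict_of_forall_mem measurableSet_Ioc
  intro s hs
  have hs0 : 0 < s := hs.1
  have hb := eta_bound m s hs
  have hnn := eta_nonneg m s hs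
  rw [Real.norm_eq_abs, abs_of_nonneg (div_nonneg hnn (by linarith))]
  rw [div_le_iff₀ (by linarith : (0:ℝ) < v + s)]
  have hrp : (0:ℝ) ≤ s ^ (-(2⁻¹) : ℝ) := Real.rpow_nonneg hs0.le _
  calc etaFn m s ≤ 4 ^ m * s ^ (-(2⁻¹) : ℝ) := hb
    _ = (4 ^ m / v) * s ^ (-(2⁻¹) : ℝ) * v := by field_simp
    _ ≤ (4 ^ m / v) * s ^ (-(2⁻¹) : ℝ) * (v + s) := by
        have : (0:ℝ) ≤ (4 ^ m / v) * s ^ (-(2⁻¹) : ℝ) :=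
          mul_nonneg (div_nonneg (by positivity) hv.le) hrp
        nlinarith

lemma pascal_sum (m : ℕ) (z : ℕ → ℝ) (L : ℝ) :
    ∑ k ∈ Finset.range (m + 2), (((m+1).choose k : ℕ) : ℝ) * z k * L ^ (m + 1 - k)
      = (∑ k ∈ Finset.range (m + 1), ((m.choose k : ℕ) : ℝ) * z k * L ^ (m - k)) * L
        + ∑ k ∈ Finset.range (m + 1), ((m.choose k : ℕ) : ℝ) * L ^ (m - k) * z (k + 1) := by
  rw [Finset.sum_range_succ' _ (m+1)]
  have h1 : ∀ i ∈ Finset.range (m+1),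
      (((m+1).choose (i+1) : ℕ) : ℝ) * z (i+1) * L ^ (m + 1 - (i+1))
        = ((m.choose i : ℕ) : ℝ) * L ^ (m - i) * z (i+1)
          + ((m.choose (i+1) : ℕ) : ℝ) * z (i+1) * L ^ (m - i) := by
    intro i hi
    rw [Nat.choose_succ_succ, Nat.succ_sub_succ]
    push_cast
    ring
  rw [Finset.sum_congr rfl h1, Finset.sum_add_distrib]
  have h2 : ∑ i ∈ Finset.range (m+1), ((m.choose (i+1) : ℕ) : ℝ) * z (i+1) * L ^ (m - i)
      = ∑ i ∈ Finset.range m, ((m.choose (i+1) : ℕ) : ℝ) * z (i+1) * L ^ (m - i) := by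
    rw [Finset.sum_range_succ, Nat.choose_succ_self]
    simp
  have h3 : (∑ k ∈ Finset.range (m + 1), ((m.choose k : ℕ) : ℝ) * z k * L ^ (m - k)) * L
      = (∑ i ∈ Finset.range m, ((m.choose (i+1) : ℕ) : ℝ) * z (i+1) * L ^ (m - i))
        + z 0 * L ^ (m + 1) := by
    rw [Finset.sum_mul, Finset.sum_range_succ' _ m]
    congr 1
    · apply Finset.sum_congr rfl
      intro i hi
      have hsub : m - (i+1) + 1 = m - i := by
        have := Finset.mem_range.mp hi; omega
      rw [mul_assoc, ← pow_succ, hsub]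
    · rw [mul_assoc, ← pow_succ]
      simp
  rw [h2, h3]
  simp only [Nat.choose_zero_right, Nat.cast_one, one_mul, Nat.sub_zero]
  ring

lemma eta_lower (m : ℕ) : ∀ v ∈ Set.Ioc (0:ℝ) 1,
    ∑ k ∈ Finset.range (m + 1), (m.choose k : ℝ) * zetaFn k v * Real.log 2 ^ (m - k)
      ≤ etaFn m v := by
  induction m with
  | zero =>
    intro v hv
    show _ ≤ (1:ℝ)
    simp [zetaFn]
  | succ m ih =>
    intro v hv
    have hv0 : 0 < v := hv.1
    have hv1 : v ≤ 1 := hv.2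
    set L := Real.log 2 with hLdef
    have hL0 : 0 ≤ L := Real.log_nonneg (by norm_num)
    set B : ℝ → ℝ := fun s =>
      ∑ k ∈ Finset.range (m + 1), (m.choose k : ℝ) * zetaFn k s * L ^ (m - k) with hBdef
    have hBanti : AntitoneOn B (Set.Ioc (0:ℝ) 1) := by
      intro s hs t ht hst
      apply Finset.sum_le_sum
      intro k _
      have hz := (zeta_facts k).2 hs ht hst
      have h1 : (0:ℝ) ≤ (m.choose k : ℝ) := by positivity
      have h2 : (0:ℝ) ≤ L ^ (m-k) := by positivity
      have h3 := zeta_nonneg k ht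
      exact mul_le_mul_of_nonneg_right (mul_le_mul_of_nonneg_left hz h1) h2
    have hi01 : IntegrableOn (fun s => etaFn m s / (v + s)) (Set.Ioc (0:ℝ) 1) volume :=
      eta_integrableOn m hv0
    have hi1 : IntervalIntegrable (fun s => etaFn m s / (v + s)) volume 0 v :=
      (intervalIntegrable_iff_integrableOn_Ioc_of_le hv0.le).mpr
        (hi01.mono_set (Set.Ioc_subset_Ioc le_rfl hv1))
    have hi2 : IntervalIntegrable (fun s => etaFn m s / (v + s)) volume v 1 :=
      (intervalIntegrable_iff_integrableOn_Ioc_of_le hv1).mpr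
        (hi01.mono_set (Set.Ioc_subset_Ioc hv0.le le_rfl))
    have hsplit : etaFn (m+1) v
        = (∫ s in (0:ℝ)..v, etaFn m s / (v + s)) + ∫ s in v..(1:ℝ), etaFn m s / (v + s) :=
      (intervalIntegral.integral_add_adjacent_intervals hi1 hi2).symm
    -- first piece : ∫₀ᵛ  ≥  B v * log 2
    have hker : IntervalIntegrable (fun s : ℝ => B v / (v + s)) volume 0 v := by
      apply ContinuousOn.intervalIntegrable
      apply ContinuousOn.div continuousOn_const
        (continuous_const.add continuous_id).continuousOn
      intro s hsIn
      rw [Set.uIcc_of_le hv0.le] at hsIn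
      have := hsIn.1
      exact (by linarith : (0:ℝ) < v + s).ne'
    have hval1 : (∫ s in (0:ℝ)..v, B v / (v + s)) = B v * L := by
      have h1 : (∫ s in (0:ℝ)..v, B v / (v + s)) = B v * ∫ s in (0:ℝ)..v, 1 / (v + s) := by
        rw [← intervalIntegral.integral_const_mul]
        apply intervalIntegral.integral_congr
        intro s _
        ring
      have h2 : (∫ s in (0:ℝ)..v, 1 / (v + s)) = L := by
        have h3 := intervalIntegral.integral_comp_add_left (a := (0:ℝ)) (b := v)
          (fun u => 1 / u) v
        simp only [add_zero] at h3
        rw [h3, integral_one_div, hLdef]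
        · congr 1
          field_simp
          ring
        · rw [Set.uIcc_of_le (by linarith)]
          intro h
          exact absurd h.1 (by linarith)
      rw [h1, h2]
    have hp1 : B v * L ≤ ∫ s in (0:ℝ)..v, etaFn m s / (v + s) := by
      rw [← hval1]
      apply intervalIntegral.integral_mono_ae_restrict hv0.le hker hi1
      apply aeIcc
      intro s hs
      have hs1 : s ∈ Set.Ioc (0:ℝ) 1 := ⟨hs.1, hs.2.trans hv1⟩
      have hBv : B v ≤ B s := hBanti hs1 hv hs.2
      have hBs : B s ≤ etaFn m s := ih s hs1
      have hpos : (0:ℝ) < v + s := by linarith [hs.1]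
      exact (div_le_div_iff_of_pos_right hpos).mpr (hBv.trans hBs)
    -- second piece : ∫ᵥ¹  ≥  Σ C(m,k) L^(m-k) ζ_{k+1}(v)
    have hzint : ∀ k ∈ Finset.range (m+1), IntervalIntegrable
        (fun s => (m.choose k : ℝ) * L ^ (m-k) * (zetaFn k s / (v + s))) volume v 1 :=
      fun k _ => (zeta_intervalIntegrable k hv0.le hv0 hv1 le_rfl).const_mul _
    have hBrep : ∀ s : ℝ, B s / (v + s)
        = ∑ k ∈ Finset.range (m+1), (m.choose k : ℝ) * L ^ (m-k) * (zetaFn k s / (v + s)) := by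
      intro s
      rw [hBdef]
      rw [Finset.sum_div]
      apply Finset.sum_congr rfl
      intro k _
      ring
    have hBint : IntervalIntegrable (fun s => B s / (v + s)) volume v 1 := by
      have h := IntervalIntegrable.sum (Finset.range (m+1)) hzint
      have heqf : (fun s => B s / (v + s))
          = ∑ k ∈ Finset.range (m+1),
              (fun s => (m.choose k : ℝ) * L ^ (m-k) * (zetaFn k s / (v + s))) := by
        funext s
        rw [hBrep s, Finset.sum_apply]
      rw [heqf]
      exact h
    have heq2 : (∫ s in v..(1:ℝ), B s / (v + s))
        = ∑ k ∈ Finset.range (m+1), (m.choose k : ℝ) * L ^ (m-k) * zetaFn (k+1) v := by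
      rw [intervalIntegral.integral_congr (g := fun s =>
          ∑ k ∈ Finset.range (m+1), (m.choose k : ℝ) * L ^ (m-k) * (zetaFn k s / (v + s)))
          (fun s _ => hBrep s)]
      rw [intervalIntegral.integral_finset_sum hzint]
      apply Finset.sum_congr rfl
      intro k _
      rw [intervalIntegral.integral_const_mul]
      rfl
    have hp2 : (∑ k ∈ Finset.range (m+1), (m.choose k : ℝ) * L ^ (m-k) * zetaFn (k+1) v)
        ≤ ∫ s in v..(1:ℝ), etaFn m s / (v + s) := by
      rw [← heq2]
      apply intervalIntegral.integral_mono_on hv1 hBint hi2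
      intro s hsIn
      have hsmem : s ∈ Set.Ioc (0:ℝ) 1 := ⟨lt_of_lt_of_le hv0 hsIn.1, hsIn.2⟩
      have hpos : (0:ℝ) < v + s := by linarith [hsmem.1]
      exact (div_le_div_iff_of_pos_right hpos).mpr (ih s hsmem)
    calc ∑ k ∈ Finset.range (m + 1 + 1), ((m+1).choose k : ℝ) * zetaFn k v * L ^ (m + 1 - k)
        = B v * L + ∑ k ∈ Finset.range (m+1), (m.choose k : ℝ) * L ^ (m-k) * zetaFn (k+1) v := by
          rw [hBdef]
          exact pascal_sum m (fun k => zetaFn k v) L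
      _ ≤ (∫ s in (0:ℝ)..v, etaFn m s / (v + s)) + ∫ s in v..(1:ℝ), etaFn m s / (v + s) :=
          add_le_add hp1 hp2
      _ = etaFn (m+1) v := hsplit.symm

/-- `η_m(v) ≥ Σ_{k=0}^m C(m,k) ζ_k(v) (ln 2)^{m-k}` for `m ≥ 1` and `v ∈ (0,1]`. -/
theorem etaFn_lower_bound (m : ℕ) (hm : 1 ≤ m) (v : ℝ) (hv : v ∈ Set.Ioc (0 : ℝ) 1) :
    ∑ k ∈ Finset.range (m + 1), (m.choose k : ℝ) * zetaFn k v * Real.log 2 ^ (m - k)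
      ≤ etaFn m v :=
  eta_lower m v hv
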